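/- For the symmetric generalized binomial distribution with nonnegative probabilities, c_n ≤ n² for all n, where c_n/x_n! is the n-th coefficient of t² N'(t)²/N(t). -/

import Mathlib

open PowerSeries Finset

/-- Formal exponential of a power series (intended for series with zero constant term):
coefficientwise `exp F = ∑_k F^k / k!`, which is a finite sum in each coefficient. -/
noncomputable def expS (F : PowerSeries ℝ) : PowerSeries ℝ :=
  PowerSeries.mk fun n => ∑ k ∈ Finset.range (n + 1),
    (1 / (k.factorial : ℝ)) * PowerSeries.coeff n (F ^ k)

/-- Formal logarithm of a power series (intended for series with constant term 1):
coefficientwise `log N = ∑_{k≥1} (-1)^{k+1} (N-1)^k / k`. -/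
noncomputable def logS (N : PowerSeries ℝ) : PowerSeries ℝ :=
  PowerSeries.mk fun n => ∑ k ∈ Finset.range (n + 1),
    ((-1 : ℝ) ^ (k + 1) / (k : ℝ)) * PowerSeries.coeff n ((N - 1) ^ k)

/-- The formal power `N^η := exp (η · log N)`. -/
noncomputable def powS (N : PowerSeries ℝ) (η : ℝ) : PowerSeries ℝ :=
  expS (η • logS N)

/-- Deformed factorial `x_n! = x_1 x_2 ⋯ x_n`, with `x_0! = 1`. -/
noncomputable def xfac (x : ℕ → ℝ) (n : ℕ) : ℝ := ∏ k ∈ Finset.Icc 1 n, x k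

/-!
Write `θ = X d/dX`, so that `[Xⁿ] θ f = n [Xⁿ] f`. For `N = exp F` the chain rule gives
`θ N = (θ F) N`, hence `θ² N = ((θ F)² + θ² F) N`, while `X² N'² / N = (θ F)² N`. Taking the
`n`-th coefficient, `n² [Xⁿ] N = [Xⁿ] (θ F)² N + [Xⁿ] (θ² F) N`, and the last term is `≥ 0`
since `F` has nonnegative coefficients: this is the nonnegativity of the variance
`η (1 - η) (n² - c_n)`. Dividing by `[Xⁿ] N ≥ 0` gives `c_n ≤ n²`.
-/

namespace PowerSeries

section CommSemiring

variable {R : Type*} [CommSemiring R]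

theorem coeff_pow_eq_zero_of_lt {f : R⟦X⟧} (hf0 : constantCoeff f = 0) {j k : ℕ} (h : j < k) :
    coeff j (f ^ k) = 0 :=
  coeff_of_lt_order _ ((Nat.cast_lt.2 h).trans_le (le_order_pow_of_constantCoeff_eq_zero k hf0))

noncomputable def eulerOp (f : R⟦X⟧) : R⟦X⟧ := X * d⁄dX R f

theorem coeff_eulerOp (f : R⟦X⟧) (n : ℕ) : coeff n f.eulerOp = n * coeff n f := by
  cases n with
  | zero => simp [eulerOp]
  | succ n => rw [eulerOp, coeff_succ_X_mul, coeff_derivative]; push_cast; ring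

theorem eulerOp_mul (f g : R⟦X⟧) : (f * g).eulerOp = f.eulerOp * g + f * g.eulerOp := by
  simp only [eulerOp, Derivation.leibniz, smul_eq_mul]; ring

end CommSemiring

section CoeffNonneg

variable {R : Type*} [CommSemiring R] [PartialOrder R]

def CoeffNonneg (f : R⟦X⟧) : Prop := ∀ n, 0 ≤ coeff n f

namespace CoeffNonneg

variable {f g : R⟦X⟧}

theorem X_mul (hf : f.CoeffNonneg) : (X * f).CoeffNonneg
  | 0 => by simp
  | n + 1 => by rw [coeff_succ_X_mul]; exact hf n

variable [IsOrderedRing R]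

theorem mul (hf : f.CoeffNonneg) (hg : g.CoeffNonneg) : (f * g).CoeffNonneg := fun n => by
  rw [coeff_mul]; exact sum_nonneg fun p _ => mul_nonneg (hf p.1) (hg p.2)

theorem pow (hf : f.CoeffNonneg) (k : ℕ) : (f ^ k).CoeffNonneg := by
  induction k with
  | zero => intro n; rw [pow_zero, coeff_one]; split_ifs <;> simp
  | succ k ih => rw [pow_succ]; exact ih.mul hf

theorem derivative (hf : f.CoeffNonneg) : (d⁄dX R f).CoeffNonneg := fun n => by
  rw [coeff_derivative]; exact mul_nonneg (hf _) (add_nonneg n.cast_nonneg zero_le_one)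

theorem eulerOp (hf : f.CoeffNonneg) : f.eulerOp.CoeffNonneg :=
  hf.derivative.X_mul

end CoeffNonneg

end CoeffNonneg

end PowerSeries

section ExpS

variable {F : ℝ⟦X⟧}

theorem expS_eq_subst_exp (hF0 : constantCoeff F = 0) : expS F = (exp ℝ).subst F := by
  ext n
  rw [expS, coeff_mk, coeff_subst' (HasSubst.of_constantCoeff_zero' hF0),
    finsum_eq_sum_of_support_subset (s := range (n + 1))]
  · simp [coeff_exp]
  · intro k hk
    by_contra h
    simp only [coe_range, Set.mem_Iio, not_lt] at h
    exact hk (by simp [coeff_pow_eq_zero_of_lt hF0 (Nat.lt_of_succ_le h)])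

theorem constantCoeff_expS : constantCoeff (expS F) = 1 := by
  rw [← coeff_zero_eq_constantCoeff_apply, expS, coeff_mk]; simp

theorem derivative_expS (hF0 : constantCoeff F = 0) :
    d⁄dX ℝ (expS F) = d⁄dX ℝ F * expS F := by
  rw [expS_eq_subst_exp hF0, derivative_subst (HasSubst.of_constantCoeff_zero' hF0),
    derivative_exp, mul_comm]

theorem eulerOp_expS (hF0 : constantCoeff F = 0) : (expS F).eulerOp = F.eulerOp * expS F := by
  rw [eulerOp, eulerOp, derivative_expS hF0, mul_assoc]

theorem eulerOp_eulerOp_expS (hF0 : constantCoeff F = 0) :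
    (expS F).eulerOp.eulerOp = (F.eulerOp ^ 2 + F.eulerOp.eulerOp) * expS F := by
  rw [eulerOp_expS hF0, eulerOp_mul, eulerOp_expS hF0]; ring

theorem X_sq_mul_derivative_sq_mul_inv_expS (hF0 : constantCoeff F = 0) :
    X ^ 2 * d⁄dX ℝ (expS F) ^ 2 * (expS F)⁻¹ = F.eulerOp ^ 2 * expS F := by
  have hinv : expS F * (expS F)⁻¹ = 1 :=
    PowerSeries.mul_inv_cancel _ (by rw [constantCoeff_expS]; exact one_ne_zero)
  calc X ^ 2 * d⁄dX ℝ (expS F) ^ 2 * (expS F)⁻¹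
      = F.eulerOp ^ 2 * expS F * (expS F * (expS F)⁻¹) := by
        rw [derivative_expS hF0, eulerOp]; ring
    _ = F.eulerOp ^ 2 * expS F := by rw [hinv, mul_one]

theorem PowerSeries.CoeffNonneg.expS (hF : F.CoeffNonneg) : (expS F).CoeffNonneg := fun n => by
  rw [_root_.expS, coeff_mk]
  exact sum_nonneg fun k _ => mul_nonneg (by positivity) (hF.pow k n)

theorem coeff_eulerOp_sq_mul_expS_le (hF0 : constantCoeff F = 0) (hF : F.CoeffNonneg) (n : ℕ) :
    coeff n (F.eulerOp ^ 2 * expS F) ≤ n ^ 2 * coeff n (expS F) := by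
  have hsplit : n ^ 2 * coeff n (expS F) =
      coeff n (F.eulerOp ^ 2 * expS F) + coeff n (F.eulerOp.eulerOp * expS F) := by
    rw [← map_add, ← add_mul, ← eulerOp_eulerOp_expS hF0, coeff_eulerOp, coeff_eulerOp]
    ring
  rw [hsplit]
  exact le_add_of_nonneg_right ((hF.eulerOp.eulerOp.mul hF.expS) n)

end ExpS

theorem stmt11_general (a : ℕ → ℝ) (ha0 : a 0 = 0) (ha : ∀ n, 1 ≤ n → 0 ≤ a n)
    (N : PowerSeries ℝ) (hN : N = expS (PowerSeries.mk a))
    (xf : ℕ → ℝ) (hxf : ∀ n, xf n = (PowerSeries.coeff n N)⁻¹)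
    (c : ℕ → ℝ)
    (hc : ∀ n, c n = xf n *
      PowerSeries.coeff n (PowerSeries.X ^ 2 * N.derivativeFun ^ 2 * N⁻¹)) :
    ∀ n : ℕ, c n ≤ (n : ℝ) ^ 2 := by
  subst hN
  set F : ℝ⟦X⟧ := mk a
  have hF0 : constantCoeff F = 0 := by simp [F, ha0]
  have hF : F.CoeffNonneg := fun
    | 0 => by simp [F, ha0]
    | k + 1 => by simpa [F] using ha (k + 1) k.succ_pos
  intro n
  have hc' : c n = (coeff n (expS F))⁻¹ * coeff n (F.eulerOp ^ 2 * expS F) := by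
    rw [hc, hxf, ← X_sq_mul_derivative_sq_mul_inv_expS hF0]
    rfl -- `N.derivativeFun` is the function underlying `d⁄dX ℝ N`
  -- `x⁻¹ * x ≤ 1` also covers a vanishing coefficient, where `x⁻¹ = 0`.
  calc c n ≤ (coeff n (expS F))⁻¹ * (n ^ 2 * coeff n (expS F)) := by
        rw [hc']
        exact mul_le_mul_of_nonneg_left (coeff_eulerOp_sq_mul_expS_le hF0 hF n)
          (inv_nonneg.2 (hF.expS n))
    _ = n ^ 2 * ((coeff n (expS F))⁻¹ * coeff n (expS F)) := by ring
    _ ≤ n ^ 2 := mul_le_of_le_one_right (by positivity) inv_mul_le_one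

theorem stmt11 (a : ℕ → ℝ) (ha0 : a 0 = 0) (ha1 : 0 < a 1) (ha : ∀ n, 1 ≤ n → 0 ≤ a n)
    (N : PowerSeries ℝ) (hN : N = expS (PowerSeries.mk a))
    (xf : ℕ → ℝ) (hxf : ∀ n, xf n = (PowerSeries.coeff n N)⁻¹)
    (c : ℕ → ℝ)
    (hc : ∀ n, c n = xf n *
      PowerSeries.coeff n (PowerSeries.X ^ 2 * N.derivativeFun ^ 2 * N⁻¹)) :
    ∀ n : ℕ, c n ≤ (n : ℝ) ^ 2 :=
  stmt11_general a ha0 ha N hN xf hxf c hc
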